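/- arXiv:1208.1434 — 6 statements merged into one kernel-verified Lean document; each statement's English description precedes it below -/
import Mathlib

section
/- Let α be a real number and (c_n)_{n≥1} a sequence of positive integers, with q_n, A_n the data of the generalized alternating-Sylvester expansion of α. Then the series Σ_{n=1}^∞ (−1)^{n−1} q_n converges and α = q_0 + Σ_{n=1}^∞ (−1)^{n−1} q_n. -/
/-!
With `a = ⌊c/x⌋` one has `a x ≤ c < (a+1) x`, so the step `x ↦ c/a - x` maps `[0, 1)` into
`[0, 1/2]` and halves every `x ≤ 1/2` (then `a ≥ 2c ≥ 2`). Hence `A_n ≤ 2^{1-n}`, and since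
`q_n = A_n + A_{n+1}` the alternating partial sums telescope to `α - (-1)^N A_{N+1} → α`.
-/

open Filter Topology

/-- The rational value `c/⌊c/x⌋` used at each step (0 if `x = 0`). -/
noncomputable def gasQaux (cn : ℕ) (x : ℝ) : ℝ :=
  if x = 0 then 0 else (cn : ℝ) / (⌊(cn : ℝ) / x⌋ : ℝ)

/-- `gasA c α n` is `A_n` of the generalized alternating-Sylvester expansion of `α`
(for `n ≥ 1`; the value at `0` is a dummy). `A_1 = α - ⌊α⌋`, `A_{n+1} = q_n - A_n`. -/
noncomputable def gasA (c : ℕ → ℕ) (α : ℝ) : ℕ → ℝ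
  | 0 => 0
  | 1 => α - ⌊α⌋
  | n + 2 => gasQaux (c (n + 1)) (gasA c α (n + 1)) - gasA c α (n + 1)

/-- `gasQ c α n` is `q_n`: `q_0 = ⌊α⌋`; for `n ≥ 1`, `q_n = c_n / a_n` if `A_n ≠ 0`, else `0`. -/
noncomputable def gasQ (c : ℕ → ℕ) (α : ℝ) : ℕ → ℝ
  | 0 => (⌊α⌋ : ℤ)
  | n + 1 => gasQaux (c (n + 1)) (gasA c α (n + 1))

/-- `gasa c α n` is `a_n = ⌊c_n / A_n⌋` (meaningful when `A_n ≠ 0`). -/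
noncomputable def gasa (c : ℕ → ℕ) (α : ℝ) (n : ℕ) : ℤ :=
  ⌊(c n : ℝ) / gasA c α n⌋

section Step

variable {cn : ℕ} {x : ℝ}

lemma gasQaux_of_ne_zero (hx : x ≠ 0) : gasQaux cn x = cn / ⌊(cn : ℝ) / x⌋ := if_neg hx

lemma floor_natCast_div_bounds (hx0 : 0 < x) (hx1 : x ≤ 1) :
    (cn : ℝ) ≤ ⌊(cn : ℝ) / x⌋ ∧ (⌊(cn : ℝ) / x⌋ : ℝ) * x ≤ cn ∧
      (cn : ℝ) < (⌊(cn : ℝ) / x⌋ + 1) * x := by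
  refine ⟨?_, (le_div_iff₀ hx0).mp (Int.floor_le _), (div_lt_iff₀ hx0).mp (Int.lt_floor_add_one _)⟩
  have : ((cn : ℤ) : ℝ) ≤ (cn : ℝ) / x := by
    rw [Int.cast_natCast, le_div_iff₀ hx0]
    nlinarith [(Nat.cast_nonneg cn : (0 : ℝ) ≤ cn)]
  exact_mod_cast Int.le_floor.mpr this

lemma gasQaux_sub_self_nonneg (hc : 0 < cn) (hx0 : 0 ≤ x) (hx1 : x ≤ 1) :
    0 ≤ gasQaux cn x - x := by
  rcases hx0.eq_or_lt with rfl | hx0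
  · simp [gasQaux]
  obtain ⟨hca, hax, -⟩ := floor_natCast_div_bounds (cn := cn) hx0 hx1
  have ha : (0 : ℝ) < ⌊(cn : ℝ) / x⌋ := lt_of_lt_of_le (by exact_mod_cast hc) hca
  rw [gasQaux_of_ne_zero hx0.ne', sub_nonneg, le_div_iff₀ ha]
  linarith

lemma gasQaux_sub_self_le_half (hc : 0 < cn) (hx0 : 0 ≤ x) (hx1 : x < 1) :
    gasQaux cn x - x ≤ 1 / 2 := by
  rcases hx0.eq_or_lt with rfl | hx0
  · simp [gasQaux]
  obtain ⟨hca, -, hcx⟩ := floor_natCast_div_bounds (cn := cn) hx0 hx1.le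
  set a : ℝ := (⌊(cn : ℝ) / x⌋ : ℝ)
  have hc1 : (1 : ℝ) ≤ cn := by exact_mod_cast hc
  have ha : 0 < a := by linarith
  -- `c/a - x < c/a - c/(a+1) = c/(a(a+1)) ≤ 1/(a+1) ≤ 1/2`
  rw [gasQaux_of_ne_zero hx0.ne', sub_le_iff_le_add, div_le_iff₀ ha]
  nlinarith [mul_lt_mul_of_pos_left hcx ha, mul_le_mul hca hca (by linarith) ha.le]

lemma gasQaux_sub_self_le_half_self (hc : 0 < cn) (hx0 : 0 ≤ x) (hx1 : x ≤ 1 / 2) :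
    gasQaux cn x - x ≤ x / 2 := by
  rcases hx0.eq_or_lt with rfl | hx0
  · simp [gasQaux]
  obtain ⟨-, -, hcx⟩ := floor_natCast_div_bounds (cn := cn) hx0 (by linarith)
  have ha : (2 : ℝ) ≤ ⌊(cn : ℝ) / x⌋ := by
    have : ((2 : ℤ) : ℝ) ≤ (cn : ℝ) / x := by
      rw [Int.cast_ofNat, le_div_iff₀ hx0]
      have : (1 : ℝ) ≤ cn := by exact_mod_cast hc
      linarith
    exact_mod_cast Int.le_floor.mpr this
  rw [gasQaux_of_ne_zero hx0.ne', sub_le_iff_le_add, div_le_iff₀ (by linarith)]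
  nlinarith

end Step

section Expansion

variable (c : ℕ → ℕ) (α : ℝ)

lemma gasQ_succ_eq_add (n : ℕ) : gasQ c α (n + 1) = gasA c α (n + 1) + gasA c α (n + 2) := by
  simp only [gasQ, gasA]
  ring

lemma gas_partial_sum_eq (N : ℕ) :
    gasQ c α 0 + ∑ k ∈ Finset.range N, (-1 : ℝ) ^ k * gasQ c α (k + 1) =
      α - (-1) ^ N * gasA c α (N + 1) := by
  induction N with
  | zero => simp [gasQ, gasA]
  | succ N ih =>
    rw [Finset.sum_range_succ, ← add_assoc, ih, gasQ_succ_eq_add, pow_succ]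
    ring

variable {c} (hc : ∀ n, 1 ≤ n → 0 < c n)
include hc

lemma gasA_succ_mem_Ico (n : ℕ) : gasA c α (n + 1) ∈ Set.Ico 0 1 := by
  induction n with
  | zero => exact ⟨Int.fract_nonneg α, Int.fract_lt_one α⟩
  | succ n ih =>
    have hc' := hc (n + 1) n.succ_pos
    exact ⟨gasQaux_sub_self_nonneg hc' ih.1 ih.2.le,
      (gasQaux_sub_self_le_half hc' ih.1 ih.2).trans_lt (by norm_num)⟩

lemma gasA_add_two_le_half (n : ℕ) : gasA c α (n + 2) ≤ 1 / 2 := by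
  obtain ⟨h0, h1⟩ := gasA_succ_mem_Ico α hc n
  exact gasQaux_sub_self_le_half (hc _ n.succ_pos) h0 h1

lemma gasA_add_three_le_div_two (n : ℕ) : gasA c α (n + 3) ≤ gasA c α (n + 2) / 2 :=
  gasQaux_sub_self_le_half_self (hc _ (n + 1).succ_pos) (gasA_succ_mem_Ico α hc (n + 1)).1
    (gasA_add_two_le_half α hc n)

lemma gasA_succ_le_half_pow (n : ℕ) : gasA c α (n + 1) ≤ (1 / 2) ^ n := by
  induction n with
  | zero => simpa using (gasA_succ_mem_Ico α hc 0).2.le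
  | succ n ih =>
    cases n with
    | zero => simpa using gasA_add_two_le_half α hc 0
    | succ m =>
      calc gasA c α (m + 3) ≤ gasA c α (m + 2) / 2 := gasA_add_three_le_div_two α hc m
        _ ≤ (1 / 2) ^ (m + 1) / 2 := by gcongr
        _ = (1 / 2) ^ (m + 2) := by ring

lemma tendsto_gasA_succ_zero : Tendsto (fun n ↦ gasA c α (n + 1)) atTop (𝓝 0) :=
  squeeze_zero (fun n ↦ (gasA_succ_mem_Ico α hc n).1) (gasA_succ_le_half_pow α hc)
    (tendsto_pow_atTop_nhds_zero_of_lt_one (by norm_num) (by norm_num))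

end Expansion

/-- The series $\sum_{n=1}^\infty (-1)^{n-1} q_n$ converges and
$\alpha = q_0 + \sum_{n=1}^\infty (-1)^{n-1} q_n$. -/
theorem gas_expansion_converges_to (c : ℕ → ℕ) (hc : ∀ n, 1 ≤ n → 0 < c n) (α : ℝ) :
    Tendsto (fun N : ℕ => gasQ c α 0 + ∑ k ∈ Finset.range N, (-1 : ℝ) ^ k * gasQ c α (k + 1))
      atTop (𝓝 α) := by
  have hrem : Tendsto (fun N : ℕ ↦ (-1 : ℝ) ^ N * gasA c α (N + 1)) atTop (𝓝 0) := by
    rw [tendsto_zero_iff_norm_tendsto_zero]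
    simpa [norm_mul] using (tendsto_zero_iff_norm_tendsto_zero.mp (tendsto_gasA_succ_zero α hc))
  simpa [gas_partial_sum_eq] using tendsto_const_nhds.sub hrem
end

section
/- Let α be a real number and (c_n)_{n≥1} a sequence of positive integers, with q_n, A_n the data of the generalized alternating-Sylvester expansion of α. For every n ≥ 1, A_n ≥ A_{n+1}; moreover, if A_n ≠ 0 then A_n > A_{n+1}. -/
open Filter Topology

/-- Key step estimate: for `0 < x < 1` and `cn ≥ 1`, `x ≤ gasQaux cn x < 2x`. -/
lemma gasQaux_bounds (cn : ℕ) (hcn : 0 < cn) {x : ℝ} (hx0 : 0 < x) (hx1 : x < 1) :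
    x ≤ gasQaux cn x ∧ gasQaux cn x < 2 * x := by
  have hxne : x ≠ 0 := ne_of_gt hx0
  rw [gasQaux, if_neg hxne]
  set a : ℤ := ⌊(cn : ℝ) / x⌋ with ha
  have hcnR : (1 : ℝ) ≤ (cn : ℝ) := by exact_mod_cast hcn
  have hcx : (cn : ℝ) ≤ (cn : ℝ) / x := by
    rw [le_div_iff₀ hx0]
    nlinarith
  have ha1 : (1 : ℤ) ≤ a := by
    rw [ha, Int.le_floor]
    push_cast
    linarith
  have haR : (0 : ℝ) < (a : ℝ) := by exact_mod_cast ha1.trans_lt' (by norm_num)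
  have hfl : (a : ℝ) ≤ (cn : ℝ) / x := Int.floor_le _
  have hfu : (cn : ℝ) / x < (a : ℝ) + 1 := Int.lt_floor_add_one _
  have h1 : x ≤ (cn : ℝ) / a := by
    rw [le_div_iff₀ haR]
    have := (le_div_iff₀ hx0).mp hfl
    linarith
  have h2 : (cn : ℝ) / a < 2 * x := by
    rw [div_lt_iff₀ haR]
    have := (div_lt_iff₀ hx0).mp hfu
    have ha1R : (1 : ℝ) ≤ (a : ℝ) := by exact_mod_cast ha1
    nlinarith
  exact ⟨h1, h2⟩

lemma gasA_bounds (c : ℕ → ℕ) (hc : ∀ n, 1 ≤ n → 0 < c n) (α : ℝ) :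
    ∀ n, 1 ≤ n → 0 ≤ gasA c α n ∧ gasA c α n < 1 := by
  intro n hn
  induction n with
  | zero => omega
  | succ m ih =>
    rcases Nat.eq_or_lt_of_le hn with h | h
    · -- m + 1 = 1
      have hm : m = 0 := by omega
      subst hm
      simp only [gasA]
      have := Int.lt_floor_add_one α
      exact ⟨sub_nonneg.mpr (Int.floor_le α), by linarith⟩
    · have hm1 : 1 ≤ m := by omega
      obtain ⟨k, hk⟩ : ∃ k, m = k + 1 := ⟨m - 1, by omega⟩
      subst hk
      obtain ⟨h0, h1⟩ := ih (by omega)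
      show 0 ≤ gasA c α (k + 2) ∧ gasA c α (k + 2) < 1
      rw [show gasA c α (k + 2) = gasQaux (c (k + 1)) (gasA c α (k + 1)) - gasA c α (k + 1)
        from rfl]
      rcases eq_or_lt_of_le h0 with hz | hz
      · rw [← hz, gasQaux, if_pos rfl]; norm_num
      · obtain ⟨hl, hu⟩ := gasQaux_bounds (c (k + 1)) (hc (k + 1) (by omega)) hz h1
        constructor <;> linarith

/-- For every $n \ge 1$, $A_n \ge A_{n+1}$; moreover if $A_n \neq 0$ then $A_n > A_{n+1}$. -/
theorem gas_An_antitone (c : ℕ → ℕ) (hc : ∀ n, 1 ≤ n → 0 < c n) (α : ℝ) :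
    ∀ n, 1 ≤ n →
      gasA c α (n + 1) ≤ gasA c α n ∧
        (gasA c α n ≠ 0 → gasA c α (n + 1) < gasA c α n) := by
  intro n hn
  obtain ⟨m, hm⟩ : ∃ m, n = m + 1 := ⟨n - 1, by omega⟩
  subst hm
  obtain ⟨h0, h1⟩ := gasA_bounds c hc α (m + 1) (by omega)
  rw [show gasA c α (m + 2) = gasQaux (c (m + 1)) (gasA c α (m + 1)) - gasA c α (m + 1)
    from rfl]
  rcases eq_or_lt_of_le h0 with hz | hz
  · rw [gasQaux, if_pos hz.symm]
    exact ⟨by linarith, fun h => absurd hz.symm h⟩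
  · obtain ⟨hl, hu⟩ := gasQaux_bounds (c (m + 1)) (hc (m + 1) (by omega)) hz h1
    exact ⟨by linarith, fun _ => by linarith⟩
end

section
/- Let α be a real number and (c_n)_{n≥1} a sequence of positive integers, with a_n, A_n the data of the generalized alternating-Sylvester expansion of α. For every n ≥ 1 with A_{n+1} ≠ 0, one has a_{n+1} > a_n. -/
open Filter Topology

/-- Key analytic step: if `0 < A < 1` and `c ≥ 1`, then with `a = ⌊c/A⌋` we have
`1 ≤ a`, `0 ≤ c/a - A` and `(c/a - A) * (a + 1) < 1`. -/
lemma gas_key (A : ℝ) (cn : ℕ) (hcn : 0 < cn) (h0 : 0 < A) (h1 : A < 1) :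
    1 ≤ ⌊(cn : ℝ) / A⌋ ∧ 0 ≤ (cn : ℝ) / (⌊(cn : ℝ) / A⌋ : ℝ) - A ∧
      ((cn : ℝ) / (⌊(cn : ℝ) / A⌋ : ℝ) - A) * ((⌊(cn : ℝ) / A⌋ : ℝ) + 1) < 1 := by
  set a : ℤ := ⌊(cn : ℝ) / A⌋ with ha
  have hc1 : (1 : ℝ) ≤ (cn : ℝ) := by exact_mod_cast hcn
  have hca : (cn : ℝ) ≤ (cn : ℝ) / A := by
    rw [le_div_iff₀ h0]; nlinarith
  have hac : (cn : ℤ) ≤ a := Int.le_floor.mpr (by exact_mod_cast hca)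
  have ha1 : 1 ≤ a := le_trans (by exact_mod_cast hcn) hac
  have ha1' : (1 : ℝ) ≤ (a : ℝ) := by exact_mod_cast ha1
  have hapos : (0 : ℝ) < (a : ℝ) := by linarith
  have hfl : (a : ℝ) ≤ (cn : ℝ) / A := Int.floor_le _
  have hfl2 : (cn : ℝ) / A < (a : ℝ) + 1 := Int.lt_floor_add_one _
  have haA : (a : ℝ) * A ≤ (cn : ℝ) := (le_div_iff₀ h0).mp hfl
  have hc2 : (cn : ℝ) < ((a : ℝ) + 1) * A := (div_lt_iff₀ h0).mp hfl2
  have hd : (cn : ℝ) / (a : ℝ) * (a : ℝ) = (cn : ℝ) := div_mul_cancel₀ _ (ne_of_gt hapos)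
  have hle1 : (cn : ℝ) / (a : ℝ) ≤ 1 := (div_le_one hapos).mpr (by exact_mod_cast hac)
  refine ⟨ha1, ?_, ?_⟩
  · rw [sub_nonneg, le_div_iff₀ hapos]; linarith [mul_comm A (a : ℝ)]
  · nlinarith [hd, hc2, hle1]

/-- Invariant: for all `n`, `0 ≤ A_{n+1} < 1`. -/
lemma gasA_mem (c : ℕ → ℕ) (hc : ∀ n, 1 ≤ n → 0 < c n) (α : ℝ) :
    ∀ n, 0 ≤ gasA c α (n + 1) ∧ gasA c α (n + 1) < 1 := by
  intro n
  induction n with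
  | zero =>
    constructor
    · simpa [gasA] using Int.fract_nonneg α
    · simpa [gasA] using Int.fract_lt_one α
  | succ m ih =>
    obtain ⟨h0, h1⟩ := ih
    by_cases hA : gasA c α (m + 1) = 0
    · simp [gasA, gasQaux, hA]
    · have h0' : 0 < gasA c α (m + 1) := lt_of_le_of_ne h0 (Ne.symm hA)
      obtain ⟨hk1, hk2, hk3⟩ := gas_key (gasA c α (m + 1)) (c (m + 1))
        (hc (m + 1) (Nat.le_add_left 1 m)) h0' h1
      have hB : gasA c α (m + 2) =
          (c (m + 1) : ℝ) / (⌊(c (m + 1) : ℝ) / gasA c α (m + 1)⌋ : ℝ) - gasA c α (m + 1) := by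
        simp [gasA, gasQaux, hA]
      have ha1' : (1 : ℝ) ≤ (⌊(c (m + 1) : ℝ) / gasA c α (m + 1)⌋ : ℝ) := by exact_mod_cast hk1
      constructor
      · rw [hB]; exact hk2
      · rw [hB]; nlinarith [hk2, hk3]

/-- For every $n \ge 1$ with $A_{n+1} \neq 0$, $a_{n+1} > a_n$. -/
theorem gas_an_strict_mono (c : ℕ → ℕ) (hc : ∀ n, 1 ≤ n → 0 < c n) (α : ℝ) :
    ∀ n, 1 ≤ n → gasA c α (n + 1) ≠ 0 → gasa c α n < gasa c α (n + 1) := by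
  intro n hn hne
  obtain ⟨m', rfl⟩ : ∃ m', n = m' + 1 := ⟨n - 1, by omega⟩
  obtain ⟨hA0, hA1⟩ := gasA_mem c hc α m'
  have hAne : gasA c α (m' + 1) ≠ 0 := by
    intro h
    apply hne
    simp [gasA, gasQaux, h]
  have hApos : 0 < gasA c α (m' + 1) := lt_of_le_of_ne hA0 (Ne.symm hAne)
  obtain ⟨hk1', hk2, hk3⟩ := gas_key (gasA c α (m' + 1)) (c (m' + 1))
    (hc (m' + 1) (Nat.le_add_left 1 m')) hApos hA1
  set a : ℤ := ⌊(c (m' + 1) : ℝ) / gasA c α (m' + 1)⌋ with hadef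
  have hB : gasA c α (m' + 2) =
      (c (m' + 1) : ℝ) / (a : ℝ) - gasA c α (m' + 1) := by
    simp [gasA, gasQaux, hAne, hadef]
  have hBpos : 0 < gasA c α (m' + 2) := lt_of_le_of_ne (hB ▸ hk2) (Ne.symm hne)
  have ha1' : (1 : ℝ) ≤ (a : ℝ) := by exact_mod_cast hk1'
  have hcnext : (1 : ℝ) ≤ (c (m' + 2) : ℝ) := by
    exact_mod_cast hc (m' + 2) (Nat.le_add_left 1 (m' + 1))
  -- B * (a + 1) < 1 ≤ c_{n+1}, hence (a+1 : ℝ) ≤ c_{n+1} / B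
  have hlt : ((a : ℝ) + 1) ≤ (c (m' + 2) : ℝ) / gasA c α (m' + 2) := by
    rw [le_div_iff₀ hBpos]
    have := hB ▸ hk3
    nlinarith
  have hfloor : a + 1 ≤ ⌊(c (m' + 2) : ℝ) / gasA c α (m' + 2)⌋ := by
    apply Int.le_floor.mpr
    push_cast
    exact hlt
  show gasa c α (m' + 1) < gasa c α (m' + 2)
  unfold gasa
  omega
end

section
/- Let α and α′ be distinct real numbers, (c_n)_{n≥1} a sequence of positive integers, and let (q_n)_{n≥0} and (q′_n)_{n≥0} be the sequences of the generalized alternating-Sylvester expansions of α and α′ respectively (with the same sequence (c_n)). Then the set {j ≥ 0 : q_j ≠ q′_j} is nonempty; and letting i be its minimum, α < α′ holds if and only if: q_0 < q′_0 when i = 0; q_i < q′_i when i is odd; and q_i > q′_i when i is even and i ≥ 2. -/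
open Filter Topology

lemma gas_floor_ge (cn : ℕ) (hcn : 0 < cn) {x : ℝ} (hx : 0 < x) (hx1 : x < 1) :
    (cn : ℤ) ≤ ⌊(cn : ℝ) / x⌋ := by
  have hcn1 : (1:ℝ) ≤ cn := by exact_mod_cast hcn
  rw [Int.le_floor]
  push_cast
  rw [le_div_iff₀ hx]
  nlinarith

lemma gasA_step (cn : ℕ) (hcn : 0 < cn) {x : ℝ} (hx : 0 < x) (hx1 : x < 1) :
    x ≤ gasQaux cn x ∧ gasQaux cn x - x < 1/((cn:ℝ)+1) ∧
      (x ≤ 1/2 → gasQaux cn x - x < x/2) := by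
  have hcn1 : (1:ℝ) ≤ cn := by exact_mod_cast hcn
  have hfl := gas_floor_ge cn hcn hx hx1
  set a := ⌊(cn:ℝ)/x⌋ with ha
  have hcna : (cn:ℝ) ≤ (a:ℝ) := by exact_mod_cast hfl
  have hap : (0:ℝ) < (a:ℝ) := by linarith
  have h1 : (a:ℝ) ≤ (cn:ℝ) / x := Int.floor_le _
  have h2 : (cn:ℝ)/x < (a:ℝ) + 1 := Int.lt_floor_add_one _
  have hq : gasQaux cn x = (cn:ℝ)/(a:ℝ) := by rw [gasQaux, if_neg hx.ne']
  have h1' : (a:ℝ) * x ≤ cn := by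
    have := (le_div_iff₀ hx).mp h1; linarith
  have h2' : (cn:ℝ) < ((a:ℝ) + 1) * x := by
    have := (div_lt_iff₀ hx).mp h2; linarith
  refine ⟨?_, ?_, ?_⟩
  · rw [hq, le_div_iff₀ hap]; nlinarith
  · rw [hq]
    have key : (cn:ℝ)/(a:ℝ) - (cn:ℝ)/((a:ℝ)+1) = (cn:ℝ)/((a:ℝ)*((a:ℝ)+1)) := by
      field_simp; ring
    have hx2 : (cn:ℝ)/((a:ℝ)+1) < x := by
      rw [div_lt_iff₀ (by linarith)]; nlinarith
    have hb : (cn:ℝ)/((a:ℝ)*((a:ℝ)+1)) ≤ 1/((cn:ℝ)+1) := by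
      rw [div_le_div_iff₀ (by positivity) (by positivity)]
      nlinarith
    linarith
  · intro hhalf
    have ha2 : (2:ℝ) ≤ (a:ℝ) := by
      have : (2:ℤ) ≤ a := by
        rw [ha, Int.le_floor]
        push_cast
        rw [le_div_iff₀ hx]
        nlinarith
      exact_mod_cast this
    rw [hq]
    rw [sub_lt_iff_lt_add, div_lt_iff₀ hap]
    nlinarith

lemma gasA_nonneg_lt (c : ℕ → ℕ) (hc : ∀ n, 1 ≤ n → 0 < c n) (α : ℝ) :
    ∀ n, 0 ≤ gasA c α (n+1) ∧ gasA c α (n+1) < (1/2:ℝ)^n := by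
  intro n
  induction n with
  | zero =>
    have h1 := Int.floor_le α
    have h2 := Int.lt_floor_add_one α
    constructor
    · show (0:ℝ) ≤ α - ⌊α⌋; linarith
    · show α - (⌊α⌋:ℝ) < (1/2:ℝ)^0
      rw [pow_zero]; linarith
  | succ n ih =>
    have hA : gasA c α (n+2) = gasQaux (c (n+1)) (gasA c α (n+1)) - gasA c α (n+1) := rfl
    rcases eq_or_lt_of_le ih.1 with h0 | hpos
    · rw [hA, ← h0]
      simp [gasQaux]
    · have hlt1 : gasA c α (n+1) < 1 := lt_of_lt_of_le ih.2 (by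
        apply pow_le_one₀ <;> norm_num)
      have hcpos := hc (n+1) (by omega)
      obtain ⟨hs1, hs2, hs3⟩ := gasA_step (c (n+1)) hcpos hpos hlt1
      refine ⟨by rw [hA]; linarith, ?_⟩
      rw [hA]
      rcases Nat.eq_zero_or_pos n with hn | hn
      · subst hn
        have : (1:ℝ)/((c 1 : ℝ)+1) ≤ 1/2 := by
          have : (1:ℝ) ≤ (c 1 : ℝ) := by exact_mod_cast hcpos
          rw [div_le_div_iff₀ (by linarith) (by norm_num)]
          linarith
        norm_num
        linarith
      · have hhalf : gasA c α (n+1) ≤ 1/2 := by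
          have hpn : (1/2:ℝ)^n ≤ (1/2:ℝ)^1 :=
            pow_le_pow_of_le_one (by norm_num) (by norm_num) hn
          rw [pow_one] at hpn
          linarith [ih.2]
        have := hs3 hhalf
        have hpow : (1/2:ℝ)^(n+1) = (1/2:ℝ)^n / 2 := by ring
        rw [hpow]
        linarith [ih.2]

lemma gasA_sub (c : ℕ → ℕ) (α α' : ℝ) :
    ∀ n, (∀ j, j ≤ n → gasQ c α j = gasQ c α' j) →
      gasA c α (n+1) - gasA c α' (n+1) = (-1:ℝ)^n * (α - α') := by
  intro n
  induction n with
  | zero =>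
    intro h
    have h0 := h 0 le_rfl
    have : ((⌊α⌋:ℤ):ℝ) = ((⌊α'⌋:ℤ):ℝ) := h0
    show (α - ⌊α⌋) - (α' - ⌊α'⌋) = (-1:ℝ)^0 * (α - α')
    rw [this]; ring
  | succ n ih =>
    intro h
    have hq : gasQaux (c (n+1)) (gasA c α (n+1)) = gasQaux (c (n+1)) (gasA c α' (n+1)) :=
      h (n+1) le_rfl
    have hih := ih (fun j hj => h j (le_trans hj (Nat.le_succ n)))
    show (gasQaux (c (n+1)) (gasA c α (n+1)) - gasA c α (n+1)) -
      (gasQaux (c (n+1)) (gasA c α' (n+1)) - gasA c α' (n+1)) = (-1:ℝ)^(n+1) * (α - α')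
    rw [hq, pow_succ]
    linarith [hih]

lemma gasQaux_mono (cn : ℕ) (hcn : 0 < cn) {x y : ℝ} (hx : 0 ≤ x) (hxy : x ≤ y)
    (hy : y < 1) : gasQaux cn x ≤ gasQaux cn y := by
  rcases eq_or_lt_of_le hx with h0 | hxp
  · rw [gasQaux, if_pos h0.symm]
    by_cases hy0 : y = 0
    · simp [gasQaux, hy0]
    · have hyp : 0 < y := lt_of_le_of_ne (h0 ▸ hxy) (Ne.symm hy0)
      rw [gasQaux, if_neg hy0]
      have hf := gas_floor_ge cn hcn hyp hy
      have : (0:ℝ) < (⌊(cn:ℝ)/y⌋ : ℝ) := by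
        have : (cn:ℝ) ≤ (⌊(cn:ℝ)/y⌋ : ℝ) := by exact_mod_cast hf
        have : (1:ℝ) ≤ (cn:ℝ) := by exact_mod_cast hcn
        linarith [show (cn:ℝ) ≤ (⌊(cn:ℝ)/y⌋ : ℝ) from by exact_mod_cast hf]
      positivity
  · have hyp : 0 < y := lt_of_lt_of_le hxp hxy
    rw [gasQaux, if_neg hxp.ne', gasQaux, if_neg hyp.ne']
    have hfx := gas_floor_ge cn hcn hxp (lt_of_le_of_lt hxy hy)
    have hfy := gas_floor_ge cn hcn hyp hy
    have hcn1 : (1:ℤ) ≤ (cn:ℤ) := by exact_mod_cast hcn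
    have hfy0 : (0:ℝ) < (⌊(cn:ℝ)/y⌋ : ℝ) := by exact_mod_cast lt_of_lt_of_le hcn1 hfy
    have hfx0 : (0:ℝ) < (⌊(cn:ℝ)/x⌋ : ℝ) := by exact_mod_cast lt_of_lt_of_le hcn1 hfx
    have hle : ⌊(cn:ℝ)/y⌋ ≤ ⌊(cn:ℝ)/x⌋ := by
      apply Int.floor_le_floor
      apply div_le_div_of_nonneg_left (by positivity) hxp hxy
    gcongr

/-- For distinct reals $\alpha, \alpha'$ with expansions $(q_n), (q'_n)$ (same $(c_n)$),
the set $\{j : q_j \neq q'_j\}$ is nonempty, and if $i$ is its minimum, then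
$\alpha < \alpha'$ iff $q_0 < q'_0$ (when $i = 0$), $q_i < q'_i$ (when $i$ odd),
$q_i > q'_i$ (when $i$ even and $i \ge 2$). -/
theorem gas_order_compare (c : ℕ → ℕ) (hc : ∀ n, 1 ≤ n → 0 < c n) (α α' : ℝ)
    (hne : α ≠ α') :
    {j : ℕ | gasQ c α j ≠ gasQ c α' j}.Nonempty ∧
      ∀ i, IsLeast {j : ℕ | gasQ c α j ≠ gasQ c α' j} i →
        (α < α' ↔
          (i = 0 ∧ gasQ c α 0 < gasQ c α' 0) ∨
          (Odd i ∧ gasQ c α i < gasQ c α' i) ∨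
          (Even i ∧ 2 ≤ i ∧ gasQ c α' i < gasQ c α i)) := by
  constructor
  · by_contra hS
    have hall : ∀ j, gasQ c α j = gasQ c α' j := by
      intro j
      by_contra hj
      exact hS ⟨j, hj⟩
    have habs : 0 < |α - α'| := abs_pos.mpr (sub_ne_zero.mpr hne)
    obtain ⟨n, hn⟩ := exists_pow_lt_of_lt_one habs (by norm_num : (1/2:ℝ) < 1)
    have hsub := gasA_sub c α α' n (fun j _ => hall j)
    have h1 := gasA_nonneg_lt c hc α n
    have h2 := gasA_nonneg_lt c hc α' n
    have : |gasA c α (n+1) - gasA c α' (n+1)| = |α - α'| := by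
      rw [hsub, abs_mul, abs_pow, abs_neg, abs_one, one_pow, one_mul]
    have hb : |gasA c α (n+1) - gasA c α' (n+1)| < (1/2:ℝ)^n :=
      abs_sub_lt_iff.mpr ⟨by linarith [h1.1, h1.2, h2.1, h2.2],
        by linarith [h1.1, h1.2, h2.1, h2.2]⟩
    rw [this] at hb
    linarith
  · intro i hi
    obtain ⟨hiS, hmin⟩ := hi
    match i with
    | 0 =>
      have hne0 : ⌊α⌋ ≠ ⌊α'⌋ := by
        intro h
        exact hiS (by show ((⌊α⌋:ℤ):ℝ) = ((⌊α'⌋:ℤ):ℝ); rw [h])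
      constructor
      · intro h
        left
        refine ⟨rfl, ?_⟩
        show ((⌊α⌋:ℤ):ℝ) < ((⌊α'⌋:ℤ):ℝ)
        have hle : ⌊α⌋ ≤ ⌊α'⌋ := Int.floor_le_floor h.le
        exact Int.cast_lt.mpr (lt_of_le_of_ne hle hne0)
      · rintro (⟨-, hlt⟩ | ⟨hodd, -⟩ | ⟨-, h2, -⟩)
        · have hltR : ((⌊α⌋:ℤ):ℝ) < ((⌊α'⌋:ℤ):ℝ) := hlt
          have hlt' : ⌊α⌋ < ⌊α'⌋ := by exact_mod_cast hltR
          have := Int.lt_floor_add_one α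
          have h3 : ((⌊α⌋:ℤ):ℝ) + 1 ≤ ((⌊α'⌋:ℤ):ℝ) := by exact_mod_cast hlt'
          have := Int.floor_le α'
          linarith
        · simp [Nat.odd_iff] at hodd
        · omega
    | m + 1 =>
      have hall : ∀ j, j ≤ m → gasQ c α j = gasQ c α' j := by
        intro j hj
        by_contra hjne
        have := hmin hjne
        omega
      have hA := gasA_sub c α α' m hall
      obtain ⟨hx0, hx1⟩ := gasA_nonneg_lt c hc α m
      obtain ⟨hy0, hy1⟩ := gasA_nonneg_lt c hc α' m
      have hp1 : (1/2:ℝ)^m ≤ 1 := pow_le_one₀ (by norm_num) (by norm_num)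
      have hx1' : gasA c α (m+1) < 1 := lt_of_lt_of_le hx1 hp1
      have hy1' : gasA c α' (m+1) < 1 := lt_of_lt_of_le hy1 hp1
      have hcpos := hc (m+1) (by omega)
      have hqx : gasQ c α (m+1) = gasQaux (c (m+1)) (gasA c α (m+1)) := rfl
      have hqy : gasQ c α' (m+1) = gasQaux (c (m+1)) (gasA c α' (m+1)) := rfl
      have hm1 : gasA c α (m+1) ≤ gasA c α' (m+1) → gasQ c α (m+1) ≤ gasQ c α' (m+1) :=
        fun h => gasQaux_mono (c (m+1)) hcpos hx0 h hy1'
      have hm2 : gasA c α' (m+1) ≤ gasA c α (m+1) → gasQ c α' (m+1) ≤ gasQ c α (m+1) :=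
        fun h => gasQaux_mono (c (m+1)) hcpos hy0 h hx1'
      have hiff1 : gasA c α (m+1) < gasA c α' (m+1) ↔ gasQ c α (m+1) < gasQ c α' (m+1) := by
        constructor
        · intro h
          exact lt_of_le_of_ne (hm1 h.le) hiS
        · intro h
          by_contra hcon
          push_neg at hcon
          exact absurd (hm2 hcon) (not_le.mpr h)
      have hiff2 : gasA c α' (m+1) < gasA c α (m+1) ↔ gasQ c α' (m+1) < gasQ c α (m+1) := by
        constructor
        · intro h
          exact lt_of_le_of_ne (hm2 h.le) (Ne.symm hiS)
        · intro h
          by_contra hcon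
          push_neg at hcon
          exact absurd (hm1 hcon) (not_le.mpr h)
      rcases Nat.even_or_odd (m+1) with hev | hod
      · -- m+1 even, m odd
        have hmo : Odd m := by
          rw [Nat.even_iff] at hev; rw [Nat.odd_iff]; omega
        have hpm : (-1:ℝ)^m = -1 := hmo.neg_one_pow
        rw [hpm] at hA
        constructor
        · intro h
          right; right
          refine ⟨hev, by rcases hev with ⟨k, hk⟩; omega, hiff2.mp (by linarith)⟩
        · rintro (⟨h0, -⟩ | ⟨hodd, -⟩ | ⟨-, -, hgt⟩)
          · exact absurd h0 (by omega)
          · exact absurd hodd (by simpa [Nat.odd_iff, Nat.even_iff] using hev)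
          · have := hiff2.mpr hgt
            linarith
      · -- m+1 odd, m even
        have hme : Even m := by
          rw [Nat.odd_iff] at hod; rw [Nat.even_iff]; omega
        have hpm : (-1:ℝ)^m = 1 := hme.neg_one_pow
        rw [hpm, one_mul] at hA
        constructor
        · intro h
          right; left
          exact ⟨hod, hiff1.mp (by linarith)⟩
        · rintro (⟨h0, -⟩ | ⟨-, hlt⟩ | ⟨hev, -, -⟩)
          · exact absurd h0 (by omega)
          · have := hiff1.mpr hlt
            linarith
          · exact absurd hev (by simpa [Nat.odd_iff, Nat.even_iff] using hod)
end

section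
/- Let (c_n)_{n≥1} be a sequence of positive integers with c_n dividing c_{n+1} for all n ≥ 1. Let q_0′ ∈ ℤ and let (q_n′)_{n≥1} be a sequence of rational numbers satisfying: (1) q_n′ ≤ 1 for all n ≥ 1; (2) if q_1′ = 1 then q_2′ ≠ 0; (3) if q_m′ = 0 for some m ≥ 1 then q_n′ = 0 for all n ≥ m; (4) there is a sequence (a_n′)_{n≥1} of positive integers with a′_{n+1} ≥ (c_{n+1}/c_n) · a_n′ · (a_n′ + 1) for all n ≥ 1 such that q_n′ = c_n/a_n′ whenever q_n′ ≠ 0; (5) for every n, if q′_{n+1} ≠ 0 then either q′_{n+2} ≠ 0 or a′_{n+1} > (c_{n+1}/c_n) · a_n′ · (a_n′ + 1). Then, setting α = q_0′ + Σ_{k=1}^∞ (−1)^{k−1} q_k′ (which converges), the generalized alternating-Sylvester expansion of α with respect to (c_n) produces exactly the sequence (q_n′)_{n≥0}, i.e., q_n = q_n′ for all n ≥ 0. -/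
open Filter Topology

/-!
Since `q'_{n+1} ≤ c_n / (a'_n (a'_n + 1)) ≤ q'_n / 2`, the series converges absolutely, and its
tails `A_n = ∑_{k ≥ n} (-1)^(k-n) q'_k` satisfy `A_n = q'_n - A_{n+1}` with
`0 ≤ A_{n+1} ≤ q'_{n+1}`. Condition (5), or `q'_{n+1} = 0`, makes the bound on `A_{n+1}`
strict: `A_{n+1} < c_n / (a'_n (a'_n + 1))`. Hence `c_n / (a'_n + 1) < A_n ≤ c_n / a'_n`, so
`⌊c_n / A_n⌋ = a'_n` and the expansion reads off `q'_n`; conditions (1) and (2) give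
`0 ≤ A_1 < 1`, so the integer part is `q'_0`.
-/
noncomputable def altTail (r : ℕ → ℝ) (n : ℕ) : ℝ := ∑' k, (-1 : ℝ) ^ k * r (k + n)

section AlternatingTail

variable {r : ℕ → ℝ}

theorem summable_of_le_half (h0 : ∀ k, 0 ≤ r k) (hr : ∀ k, r (k + 1) ≤ r k / 2) :
    Summable r := by
  refine summable_of_ratio_norm_eventually_le (r := 1 / 2) (by norm_num)
    (Eventually.of_forall fun k => ?_)
  simp only [Real.norm_of_nonneg (h0 _)]
  linarith [hr k]

theorem antitone_of_le_half (h0 : ∀ k, 0 ≤ r k) (hr : ∀ k, r (k + 1) ≤ r k / 2) :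
    Antitone r :=
  antitone_nat_of_succ_le fun k => by linarith [hr k, h0 k]

theorem altTail_eq_sub (hs : Summable r) (n : ℕ) :
    altTail r n = r n - altTail r (n + 1) := by
  rw [altTail, ((summable_nat_add_iff n).mpr hs).alternating.tsum_eq_zero_add, altTail,
    sub_eq_add_neg, ← tsum_neg]
  simp only [pow_zero, one_mul, zero_add, pow_succ, mul_neg_one, neg_mul, add_right_comm _ 1 n,
    add_assoc]

theorem altTail_nonneg (hs : Summable r) (hr : Antitone r) (n : ℕ) : 0 ≤ altTail r n := by
  simpa [altTail] using
    (hr.comp_monotone fun _ _ h => Nat.add_le_add_right h n).alternating_series_le_tendsto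
      ((summable_nat_add_iff n).mpr hs).tendsto_alternating_series_tsum 0

theorem altTail_le (hs : Summable r) (hr : Antitone r) (n : ℕ) : altTail r n ≤ r n := by
  linarith [altTail_eq_sub hs n, altTail_nonneg hs hr (n + 1)]

theorem altTail_lt (hs : Summable r) {n : ℕ} (h : 0 < altTail r (n + 1)) :
    altTail r n < r n := by
  linarith [altTail_eq_sub hs n]

theorem altTail_pos (hs : Summable r) (hr : Antitone r) {n : ℕ} (h : r (n + 1) < r n) :
    0 < altTail r n := by
  linarith [altTail_eq_sub hs n, altTail_le hs hr (n + 1)]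

theorem altTail_eq_zero {n : ℕ} (h : ∀ k, n ≤ k → r k = 0) : altTail r n = 0 := by
  simp [altTail, h]

end AlternatingTail

theorem gasQaux_div_sub {C a : ℕ} {t : ℝ} (hC : 0 < C) (ha : 0 < a) (ht0 : 0 ≤ t)
    (ht : t < C / (a * (a + 1))) : gasQaux C (C / a - t) = C / a := by
  have hCr : (0 : ℝ) < C := by exact_mod_cast hC
  have har : (0 : ℝ) < a := by exact_mod_cast ha
  have hlow : (C : ℝ) / (a + 1) < C / a - t := by
    have : (C : ℝ) / a - C / (a * (a + 1)) = C / (a + 1) := by field_simp; ring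
    linarith
  have hx : 0 < (C : ℝ) / a - t := (div_pos hCr (by positivity)).trans hlow
  have hfloor : ⌊(C : ℝ) / (C / a - t)⌋ = a := by
    rw [Int.floor_eq_iff, le_div_iff₀ hx, div_lt_iff₀ hx, ← div_lt_iff₀' (by positivity)]
    push_cast
    refine ⟨?_, hlow⟩
    rw [← le_div_iff₀' har]
    linarith
  rw [gasQaux, if_neg hx.ne', hfloor]
  push_cast
  ring

theorem gasA_succ_eq_of_rec {c : ℕ → ℕ} {α : ℝ} {A : ℕ → ℝ} (h0 : A 0 = α - ⌊α⌋)
    (hA : ∀ n, A (n + 1) = gasQaux (c (n + 1)) (A n) - A n) (n : ℕ) :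
    gasA c α (n + 1) = A n := by
  induction n with
  | zero => exact h0.symm
  | succ n ih => rw [gasA, ih, hA]

section OrderedField

variable {K : Type*} [Field K] [LinearOrder K] [IsStrictOrderedRing K] {c c' x y : K}

theorem div_le_div_of_div_mul_le (hc : 0 < c) (hx : 0 < x) (hy : 0 < y) (h : c' / c * x ≤ y) :
    c' / y ≤ c / x := by
  rw [div_le_div_iff₀ hy hx, mul_comm c]
  rwa [div_mul_eq_mul_div, div_le_iff₀ hc] at h

theorem div_lt_div_of_div_mul_lt (hc : 0 < c) (hx : 0 < x) (hy : 0 < y) (h : c' / c * x < y) :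
    c' / y < c / x := by
  rw [div_lt_div_iff₀ hy hx, mul_comm c]
  rwa [div_mul_eq_mul_div, div_lt_iff₀ hc] at h

end OrderedField

/-- Conditions (3)–(5) in the definition of the set `T({c_n})` of admissible sequences. -/
structure GasAdmissible (c : ℕ → ℕ) (q : ℕ → ℚ) (a : ℕ → ℕ) : Prop where
  c_pos : ∀ n, 1 ≤ n → 0 < c n
  a_pos : ∀ n, 1 ≤ n → 0 < a n
  growth_le : ∀ n, 1 ≤ n →
    ((c (n + 1) : ℚ) / (c n : ℚ)) * (a n : ℚ) * ((a n : ℚ) + 1) ≤ (a (n + 1) : ℚ)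
  eq_div : ∀ n, 1 ≤ n → q n ≠ 0 → q n = (c n : ℚ) / (a n : ℚ)
  eq_zero_of_le : ∀ m, 1 ≤ m → q m = 0 → ∀ n, m ≤ n → q n = 0
  ne_zero_or_growth_lt : ∀ n, 1 ≤ n → q (n + 1) ≠ 0 → q (n + 2) ≠ 0 ∨
    ((c (n + 1) : ℚ) / (c n : ℚ)) * (a n : ℚ) * ((a n : ℚ) + 1) < (a (n + 1) : ℚ)

namespace GasAdmissible

variable {c : ℕ → ℕ} {q : ℕ → ℚ} {a : ℕ → ℕ}

theorem nonneg (h : GasAdmissible c q a) {n : ℕ} (hn : 1 ≤ n) : 0 ≤ q n := by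
  by_cases hq : q n = 0
  · exact hq.ge
  · rw [h.eq_div n hn hq]
    positivity

theorem succ_le_bound (h : GasAdmissible c q a) {n : ℕ} (hn : 1 ≤ n) :
    q (n + 1) ≤ (c n : ℚ) / (a n * (a n + 1)) := by
  have hc : (0 : ℚ) < c n := by exact_mod_cast h.c_pos n hn
  have ha : (0 : ℚ) < a n := by exact_mod_cast h.a_pos n hn
  by_cases hq : q (n + 1) = 0
  · rw [hq]
    positivity
  · rw [h.eq_div (n + 1) (by omega) hq]
    exact div_le_div_of_div_mul_le hc (by positivity)
      (by exact_mod_cast h.a_pos (n + 1) (by omega))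
      (by simpa only [mul_assoc] using h.growth_le n hn)

theorem succ_lt_bound (h : GasAdmissible c q a) {n : ℕ} (hn : 1 ≤ n) (hq : q (n + 1) ≠ 0)
    (hgrow : ((c (n + 1) : ℚ) / (c n : ℚ)) * (a n : ℚ) * ((a n : ℚ) + 1) < (a (n + 1) : ℚ)) :
    q (n + 1) < (c n : ℚ) / (a n * (a n + 1)) := by
  rw [h.eq_div (n + 1) (by omega) hq]
  exact div_lt_div_of_div_mul_lt (by exact_mod_cast h.c_pos n hn)
    (by have := h.a_pos n hn; positivity) (by exact_mod_cast h.a_pos (n + 1) (by omega))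
    (by simpa only [mul_assoc] using hgrow)

theorem succ_le_half (h : GasAdmissible c q a) {n : ℕ} (hn : 1 ≤ n) : q (n + 1) ≤ q n / 2 := by
  by_cases hq : q n = 0
  · rw [h.eq_zero_of_le n hn hq (n + 1) n.le_succ, hq]
    norm_num
  · have ha : (1 : ℚ) ≤ a n := by exact_mod_cast h.a_pos n hn
    have hbound : (c n : ℚ) / (a n * (a n + 1)) ≤ c n / a n / 2 := by
      rw [div_div]
      exact div_le_div_of_nonneg_left (Nat.cast_nonneg _) (by positivity) (by nlinarith)
    rw [h.eq_div n hn hq]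
    exact (h.succ_le_bound hn).trans hbound

theorem summable_antitone (h : GasAdmissible c q a) :
    Summable (fun k => (q (k + 1) : ℝ)) ∧ Antitone (fun k => (q (k + 1) : ℝ)) := by
  have h0 (k : ℕ) : (0 : ℝ) ≤ q (k + 1) := by exact_mod_cast h.nonneg k.succ_pos
  have hhalf (k : ℕ) : (q (k + 1 + 1) : ℝ) ≤ q (k + 1) / 2 := by
    exact_mod_cast h.succ_le_half k.succ_pos
  exact ⟨summable_of_le_half h0 hhalf, antitone_of_le_half h0 hhalf⟩

theorem altTail_pos (h : GasAdmissible c q a) {n : ℕ} (hq : q (n + 1) ≠ 0) :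
    0 < altTail (fun k => (q (k + 1) : ℝ)) n := by
  obtain ⟨hs, hanti⟩ := h.summable_antitone
  have hpos : 0 < q (n + 1) := lt_of_le_of_ne (h.nonneg n.succ_pos) (Ne.symm hq)
  refine _root_.altTail_pos hs hanti ?_
  exact_mod_cast (h.succ_le_half n.succ_pos).trans_lt (half_lt_self hpos)

theorem altTail_eq_zero (h : GasAdmissible c q a) {n : ℕ} (hq : q (n + 1) = 0) :
    altTail (fun k => (q (k + 1) : ℝ)) n = 0 :=
  _root_.altTail_eq_zero fun k hk => by
    simp [h.eq_zero_of_le (n + 1) n.succ_pos hq (k + 1) (by omega)]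

theorem altTail_lt_bound (h : GasAdmissible c q a) {n : ℕ} (hn : 1 ≤ n) :
    altTail (fun k => (q (k + 1) : ℝ)) n < (c n : ℝ) / (a n * (a n + 1)) := by
  obtain ⟨hs, hanti⟩ := h.summable_antitone
  by_cases hq : q (n + 1) = 0
  · rw [h.altTail_eq_zero hq]
    have := h.c_pos n hn
    have := h.a_pos n hn
    positivity
  rcases h.ne_zero_or_growth_lt n hn hq with hq2 | hgrow
  · refine (altTail_lt hs (h.altTail_pos hq2)).trans_le ?_
    simpa using (Rat.cast_le (K := ℝ)).mpr (h.succ_le_bound hn)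
  · refine (altTail_le hs hanti n).trans_lt ?_
    simpa using (Rat.cast_lt (K := ℝ)).mpr (h.succ_lt_bound hn hq hgrow)

theorem gasQaux_altTail (h : GasAdmissible c q a) (n : ℕ) :
    gasQaux (c (n + 1)) (altTail (fun k => (q (k + 1) : ℝ)) n) = q (n + 1) := by
  obtain ⟨hs, hanti⟩ := h.summable_antitone
  by_cases hq : q (n + 1) = 0
  · simp [h.altTail_eq_zero hq, hq, gasQaux]
  have hval : (q (n + 1) : ℝ) = (c (n + 1) : ℝ) / a (n + 1) := by
    simpa using congrArg (Rat.cast (K := ℝ)) (h.eq_div (n + 1) n.succ_pos hq)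
  rw [altTail_eq_sub hs, hval]
  exact gasQaux_div_sub (h.c_pos _ n.succ_pos) (h.a_pos _ n.succ_pos)
    (altTail_nonneg hs hanti _) (h.altTail_lt_bound n.succ_pos)

theorem altTail_zero_lt_one (h : GasAdmissible c q a) (h1 : q 1 ≤ 1) (h2 : q 1 = 1 → q 2 ≠ 0) :
    altTail (fun k => (q (k + 1) : ℝ)) 0 < 1 := by
  obtain ⟨hs, hanti⟩ := h.summable_antitone
  rcases h1.lt_or_eq with hlt | heq
  · exact (altTail_le hs hanti 0).trans_lt (by exact_mod_cast hlt)
  · simpa [heq] using altTail_lt hs (h.altTail_pos (h2 heq))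

end GasAdmissible

theorem gas_T_eq_S_general (c : ℕ → ℕ) (hc : ∀ n, 1 ≤ n → 0 < c n)
    (q0' : ℤ) (q' : ℕ → ℚ) (a' : ℕ → ℕ)
    (h1 : ∀ n, 1 ≤ n → q' n ≤ 1)
    (h2 : q' 1 = 1 → q' 2 ≠ 0)
    (h3 : ∀ m, 1 ≤ m → q' m = 0 → ∀ n, m ≤ n → q' n = 0)
    (ha'pos : ∀ n, 1 ≤ n → 0 < a' n)
    (ha'grow : ∀ n, 1 ≤ n →
      ((c (n + 1) : ℚ) / (c n : ℚ)) * (a' n : ℚ) * ((a' n : ℚ) + 1) ≤ (a' (n + 1) : ℚ))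
    (h4 : ∀ n, 1 ≤ n → q' n ≠ 0 → q' n = (c n : ℚ) / (a' n : ℚ))
    (h5 : ∀ n, 1 ≤ n → q' (n + 1) ≠ 0 → q' (n + 2) ≠ 0 ∨
      ((c (n + 1) : ℚ) / (c n : ℚ)) * (a' n : ℚ) * ((a' n : ℚ) + 1) < (a' (n + 1) : ℚ)) :
    ∃ α : ℝ,
      Tendsto (fun N : ℕ => (q0' : ℝ) + ∑ k ∈ Finset.range N, (-1 : ℝ) ^ k * (q' (k + 1) : ℝ))
        atTop (𝓝 α) ∧
      gasQ c α 0 = (q0' : ℝ) ∧ (∀ n, 1 ≤ n → gasQ c α n = (q' n : ℝ)) := by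
  have h : GasAdmissible c q' a' := ⟨hc, ha'pos, ha'grow, h4, h3, h5⟩
  -- `A n` is the tail starting at `q'_{n+1}`, i.e. the paper's `A_{n+1}`.
  set A := altTail (fun k => (q' (k + 1) : ℝ))
  obtain ⟨hs, hanti⟩ := h.summable_antitone
  have hfloor : ⌊(q0' : ℝ) + A 0⌋ = q0' := by
    rw [Int.floor_intCast_add, Int.floor_eq_zero_iff.mpr
      ⟨altTail_nonneg hs hanti 0, h.altTail_zero_lt_one (h1 1 le_rfl) h2⟩, add_zero]
  have hA (n : ℕ) : gasA c (q0' + A 0) (n + 1) = A n := by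
    refine gasA_succ_eq_of_rec (by rw [hfloor]; ring) (fun k => ?_) n
    rw [h.gasQaux_altTail]
    linarith [altTail_eq_sub hs k]
  refine ⟨q0' + A 0, hs.tendsto_alternating_series_tsum.const_add _, by simp [gasQ, hfloor],
    fun n hn => ?_⟩
  obtain ⟨m, rfl⟩ := Nat.exists_eq_add_of_le' hn
  rw [gasQ, hA, h.gasQaux_altTail]

/-- If $(q'_n)$ satisfies the conditions defining $T(\{c_n\})$, then setting
$\alpha = q'_0 + \sum_{k \ge 1} (-1)^{k-1} q'_k$ (which converges), the generalized
alternating-Sylvester expansion of $\alpha$ produces exactly $(q'_n)$. -/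
theorem gas_T_eq_S (c : ℕ → ℕ) (hc : ∀ n, 1 ≤ n → 0 < c n)
    (hdvd : ∀ n, 1 ≤ n → c n ∣ c (n + 1))
    (q0' : ℤ) (q' : ℕ → ℚ) (a' : ℕ → ℕ)
    (h1 : ∀ n, 1 ≤ n → q' n ≤ 1)
    (h2 : q' 1 = 1 → q' 2 ≠ 0)
    (h3 : ∀ m, 1 ≤ m → q' m = 0 → ∀ n, m ≤ n → q' n = 0)
    (ha'pos : ∀ n, 1 ≤ n → 0 < a' n)
    (ha'grow : ∀ n, 1 ≤ n →
      ((c (n + 1) : ℚ) / (c n : ℚ)) * (a' n : ℚ) * ((a' n : ℚ) + 1) ≤ (a' (n + 1) : ℚ))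
    (h4 : ∀ n, 1 ≤ n → q' n ≠ 0 → q' n = (c n : ℚ) / (a' n : ℚ))
    (h5 : ∀ n, 1 ≤ n → q' (n + 1) ≠ 0 → q' (n + 2) ≠ 0 ∨
      ((c (n + 1) : ℚ) / (c n : ℚ)) * (a' n : ℚ) * ((a' n : ℚ) + 1) < (a' (n + 1) : ℚ)) :
    ∃ α : ℝ,
      Tendsto (fun N : ℕ => (q0' : ℝ) + ∑ k ∈ Finset.range N, (-1 : ℝ) ^ k * (q' (k + 1) : ℝ))
        atTop (𝓝 α) ∧
      gasQ c α 0 = (q0' : ℝ) ∧ (∀ n, 1 ≤ n → gasQ c α n = (q' n : ℝ)) :=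
  gas_T_eq_S_general c hc q0' q' a' h1 h2 h3 ha'pos ha'grow h4 h5
end

section
/- Let (p_n)_{n≥1} be a sequence of positive integers, K ≥ 1 a real number, and suppose p_{n+1} ≥ K · p_n · (p_n + 1) holds for all sufficiently large n. Let l be an integer with 1 ≤ l ≤ ⌊K⌋. Then the number Σ_{n=1}^∞ (−1)^n l^n / p_n is irrational. -/
/-!
Write `t n = l ^ n / p n`. The growth condition gives `(p n + 1) t (n + 1) ≤ t n`, so the terms
decrease strictly and the tail `R N` of the alternating series satisfies
`t N - t (N + 1) < |R N| < t N`. If the sum were `u / v`, then `v p₁ ⋯ p_N R N` would be an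
integer, and the two bounds show that its absolute value decreases strictly in `N`: an infinite
descent in `ℕ`.
-/

open Filter Topology Finset

lemma StrictAnti.alternating_series_mem_Ioo {f : ℕ → ℝ} {s : ℝ} (hf : StrictAnti f)
    (hs : Tendsto (fun n ↦ ∑ i ∈ range n, (-1) ^ i * f i) atTop (𝓝 s)) :
    s ∈ Set.Ioo (f 0 - f 1) (f 0) := by
  have lower := hf.antitone.alternating_series_le_tendsto hs 2
  have upper := hf.antitone.tendsto_le_alternating_series hs 1
  simp only [sum_range_succ, sum_range_zero] at lower upper
  norm_num at lower upper
  constructor <;> linarith [hf (show 1 < 2 by norm_num), hf (show 2 < 3 by norm_num)]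

lemma Filter.Tendsto.sum_range_nat_add {G : Type*} [AddCommGroup G] [TopologicalSpace G]
    [IsTopologicalAddGroup G] {g : ℕ → G} {s : G}
    (hs : Tendsto (fun n ↦ ∑ i ∈ range n, g i) atTop (𝓝 s)) (N : ℕ) :
    Tendsto (fun n ↦ ∑ i ∈ range n, g (N + i)) atTop (𝓝 (s - ∑ i ∈ range N, g i)) := by
  refine ((hs.comp (tendsto_add_atTop_nat N)).sub_const _).congr fun n ↦ ?_
  simp [add_comm n N, sum_range_add]

lemma abs_alternating_series_tail_mem_Ioo {f : ℕ → ℝ} {s : ℝ} {N : ℕ}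
    (hf : ∀ n, N ≤ n → f (n + 1) < f n)
    (hs : Tendsto (fun n ↦ ∑ i ∈ range n, (-1) ^ i * f i) atTop (𝓝 s)) :
    |s - ∑ i ∈ range N, (-1) ^ i * f i| ∈ Set.Ioo (f N - f (N + 1)) (f N) := by
  have hshift : StrictAnti fun i ↦ f (N + i) :=
    strictAnti_nat_of_succ_lt fun i ↦ hf _ le_self_add
  have htail := hshift.alternating_series_mem_Ioo <|
    ((hs.sum_range_nat_add N).const_mul ((-1) ^ N)).congr fun n ↦ by
      rw [mul_sum]
      refine sum_congr rfl fun i _ ↦ ?_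
      rw [pow_add, ← mul_assoc, ← mul_assoc, ← pow_add, Even.neg_one_pow ⟨N, rfl⟩, one_mul]
  simp only [add_zero] at htail
  rwa [← abs_of_pos (sub_pos.2 (hf N le_rfl) |>.trans htail.1), abs_mul, abs_neg_one_pow,
    one_mul] at htail

lemma exists_intCast_eq_prod_mul_sum_div (a b : ℕ → ℤ) (hb : ∀ n, b n ≠ 0) (N : ℕ) :
    ∃ c : ℤ, (c : ℝ) = (∏ n ∈ range N, (b n : ℝ)) * ∑ n ∈ range N, (a n : ℝ) / b n := by
  induction N with
  | zero => exact ⟨0, by simp⟩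
  | succ N ih =>
    obtain ⟨c, hc⟩ := ih
    refine ⟨c * b N + (∏ n ∈ range N, b n) * a N, ?_⟩
    have : (b N : ℝ) ≠ 0 := by exact_mod_cast hb N
    push_cast
    rw [prod_range_succ, sum_range_succ, hc]
    field_simp

lemma irrational_of_eventually_abs_sub_lt {x : ℝ} (Q c : ℕ → ℤ)
    (h : ∀ᶠ n in atTop, |Q (n + 1) * x - c (n + 1)| < |Q n * x - c n|) : Irrational x := by
  rintro ⟨q, rfl⟩
  obtain ⟨N, hN⟩ := eventually_atTop.1 h
  have hden : (0 : ℝ) < q.den := by exact_mod_cast q.pos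
  have hint : ∀ n, ((Q n * q.num - c n * q.den : ℤ) : ℝ) = q.den * (Q n * q - c n) := by
    intro n
    push_cast
    rw [Rat.cast_def]
    field_simp
  obtain ⟨n, hn⟩ := WellFounded.not_rel_apply_succ (r := (· < ·))
    fun n ↦ (Q (N + n) * q.num - c (N + n) * q.den).natAbs
  apply hn
  rw [← Int.ofNat_lt, Int.natCast_natAbs, Int.natCast_natAbs, ← Int.cast_lt (R := ℝ),
    Int.cast_abs, Int.cast_abs, hint, hint, abs_mul, abs_mul, abs_of_pos hden]
  exact mul_lt_mul_of_pos_left (hN (N + n) le_self_add) hden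

theorem irrational_of_alternating_series {a b : ℕ → ℤ} (ha : ∀ n, 0 < a n)
    (hb : ∀ n, 0 < b n)
    (hdecay : ∀ᶠ n in atTop, ((b n : ℝ) + 1) * (a (n + 1) / b (n + 1)) ≤ a n / b n) {s : ℝ}
    (hs : Tendsto (fun n ↦ ∑ i ∈ range n, (-1) ^ i * ((a i : ℝ) / b i)) atTop (𝓝 s)) :
    Irrational s := by
  set t : ℕ → ℝ := fun n ↦ (a n : ℝ) / b n
  have hb' : ∀ n, (0 : ℝ) < b n := fun n ↦ Int.cast_pos.2 (hb n)
  have ht : ∀ n, 0 < t n := fun n ↦ div_pos (Int.cast_pos.2 (ha n)) (hb' n)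
  obtain ⟨N₀, hN₀⟩ := eventually_atTop.1 hdecay
  have hanti : ∀ n, N₀ ≤ n → t (n + 1) < t n := fun n hn ↦
    calc t (n + 1) < (b n + 1) * t (n + 1) := lt_mul_left (ht _) (by linarith [hb' n])
      _ ≤ t n := hN₀ n hn
  choose c hc using exists_intCast_eq_prod_mul_sum_div (fun n ↦ (-1) ^ n * a n) b
    fun n ↦ (hb n).ne'
  refine irrational_of_eventually_abs_sub_lt (fun N ↦ ∏ n ∈ range N, b n) c ?_
  have habs : ∀ N, |((∏ n ∈ range N, b n : ℤ) : ℝ) * s - c N|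
      = (∏ n ∈ range N, (b n : ℝ)) * |s - ∑ i ∈ range N, (-1) ^ i * t i| := by
    intro N
    rw [hc, Int.cast_prod, ← mul_sub, abs_mul, abs_of_pos (prod_pos fun n _ ↦ hb' n)]
    push_cast
    simp only [t, mul_div_assoc]
  filter_upwards [eventually_ge_atTop N₀] with N hN
  obtain ⟨-, htail_lt⟩ :=
    abs_alternating_series_tail_mem_Ioo (N := N + 1) (fun n hn ↦ hanti n (by omega)) hs
  obtain ⟨htail_gt, -⟩ :=
    abs_alternating_series_tail_mem_Ioo (N := N) (fun n hn ↦ hanti n (by omega)) hs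
  rw [habs, habs, prod_range_succ, mul_assoc]
  gcongr ?_ * ?_
  · exact prod_pos fun n _ ↦ hb' n
  calc (b N : ℝ) * |s - ∑ i ∈ range (N + 1), (-1) ^ i * t i| < b N * t (N + 1) := by
        gcongr; exact hb' N
    _ ≤ t N - t (N + 1) := by linarith [hN₀ N hN]
    _ < _ := htail_gt

lemma succ_mul_pow_succ_div_le {l x y : ℝ} (hl : 0 < l) (hx : 0 < x)
    (hxy : l * x * (x + 1) ≤ y) (n : ℕ) : (x + 1) * (l ^ (n + 1) / y) ≤ l ^ n / x := by
  have hy : 0 < y := hxy.trans_lt' (by positivity)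
  rw [mul_div_assoc', div_le_div_iff₀ hy hx]
  calc (x + 1) * l ^ (n + 1) * x = l ^ n * (l * x * (x + 1)) := by ring
    _ ≤ l ^ n * y := by gcongr

theorem irrational_alternating_series_general (p : ℕ → ℕ) (hp : ∀ n, 1 ≤ n → 0 < p n)
    (K : ℝ)
    (hgrow : ∃ N : ℕ, ∀ n, N ≤ n → K * (p n : ℝ) * ((p n : ℝ) + 1) ≤ (p (n + 1) : ℝ))
    (l : ℤ) (hl1 : 1 ≤ l) (hlK : l ≤ ⌊K⌋)
    (S : ℝ)
    (hS : Tendsto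
      (fun N : ℕ => ∑ n ∈ Finset.range N, (-1 : ℝ) ^ (n + 1) * (l : ℝ) ^ (n + 1) / (p (n + 1) : ℝ))
      atTop (𝓝 S)) :
    Irrational S := by
  obtain ⟨N, hN⟩ := hgrow
  have hl : (0 : ℝ) < l := by exact_mod_cast hl1
  have hlK : (l : ℝ) ≤ K := (Int.cast_le.2 hlK).trans (Int.floor_le K)
  have hp : ∀ n, 0 < p (n + 1) := fun n ↦ hp (n + 1) (by omega)
  rw [← irrational_neg_iff]
  refine irrational_of_alternating_series (a := fun n ↦ l ^ (n + 1)) (b := fun n ↦ p (n + 1))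
    (fun n ↦ pow_pos (by omega) _) (fun n ↦ by exact_mod_cast hp n) ?_ ?_
  · filter_upwards [eventually_ge_atTop N] with n hn
    push_cast
    refine succ_mul_pow_succ_div_le hl (by exact_mod_cast hp n) ?_ (n + 1)
    calc (l : ℝ) * p (n + 1) * (p (n + 1) + 1) ≤ K * p (n + 1) * (p (n + 1) + 1) := by gcongr
      _ ≤ p (n + 1 + 1) := hN (n + 1) (by omega)
  · refine hS.neg.congr fun n ↦ ?_
    rw [← sum_neg_distrib]
    push_cast
    refine sum_congr rfl fun i _ ↦ ?_
    ring

/-- If `(p_n)` is a sequence of positive integers with `p_{n+1} ≥ K p_n (p_n + 1)` for all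
sufficiently large `n`, where `K ≥ 1`, and `l` is an integer with `1 ≤ l ≤ ⌊K⌋`, then
`∑_{n=1}^∞ (-1)^n l^n / p_n` is irrational. -/
theorem irrational_alternating_series (p : ℕ → ℕ) (hp : ∀ n, 1 ≤ n → 0 < p n)
    (K : ℝ) (hK : 1 ≤ K)
    (hgrow : ∃ N : ℕ, ∀ n, N ≤ n → K * (p n : ℝ) * ((p n : ℝ) + 1) ≤ (p (n + 1) : ℝ))
    (l : ℤ) (hl1 : 1 ≤ l) (hlK : l ≤ ⌊K⌋)
    (S : ℝ)
    (hS : Tendsto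
      (fun N : ℕ => ∑ n ∈ Finset.range N, (-1 : ℝ) ^ (n + 1) * (l : ℝ) ^ (n + 1) / (p (n + 1) : ℝ))
      atTop (𝓝 S)) :
    Irrational S :=
  irrational_alternating_series_general p hp K hgrow l hl1 hlK S hS
end
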